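/- The group H = ⟨a, b, c | a² = b² = c² = (ab)³ = (bc)³ = (ca)³ = (abac)³ = 1⟩ has order 54; its center is cyclic of order 3 generated by (abc)², and H/Z(H) has order 18. -/

import Mathlib

/-- Relations of the group H = ⟨a,b,c | a²=b²=c²=(ab)³=(bc)³=(ca)³=(abac)³=1⟩. -/
def hRels : Set (FreeGroup (Fin 3)) :=
  { (FreeGroup.of 0) ^ 2, (FreeGroup.of 1) ^ 2, (FreeGroup.of 2) ^ 2,
    (FreeGroup.of 0 * FreeGroup.of 1) ^ 3,
    (FreeGroup.of 1 * FreeGroup.of 2) ^ 3,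
    (FreeGroup.of 2 * FreeGroup.of 0) ^ 3,
    (FreeGroup.of 0 * FreeGroup.of 1 * FreeGroup.of 0 * FreeGroup.of 2) ^ 3 }

/-!
With `u = ab` and `v = bc`, the elements `u`, `v`, `uv = ac` and `u⁻¹v = abac` all have order
dividing 3. This forces `z = ⁅u, v⁆` to commute with `u` and `v` (so `⟨u, v⟩` is a quotient of the
Heisenberg group of order 27), while conjugation by `a` inverts `u` and sends `v` to `v⁻¹z⁻¹`.
Hence every element of `H` is `u^i v^j z^k a^e` with `i, j, k < 3`, `e < 2`. The matrices
`[[1, x, z], [0, ±1, y], [0, 0, 1]]` over `𝔽₃` form a group of order 54 containing elements that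
satisfy the relations and whose 54 normal forms are distinct, so `H` is isomorphic to it, and the
center can be computed there.
-/

open scoped commutatorElement

section Heisenberg

variable {G : Type*} [Group G] {u v w x y : G}

theorem inv_eq_mul_self_of_pow_three (h : x ^ 3 = 1) : x⁻¹ = x * x :=
  inv_eq_of_mul_eq_one_right (by rw [← h, pow_three])

theorem inv_mul_inv_eq_self_of_pow_three (h : x ^ 3 = 1) : x⁻¹ * x⁻¹ = x := by
  rw [← inv_eq_mul_self_of_pow_three (by rw [inv_pow, h, inv_one]), inv_inv]

theorem mul_mul_eq_of_mul_pow_three (h : (x * y) ^ 3 = 1) :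
    x * y * x = y⁻¹ * x⁻¹ * y⁻¹ := by
  rw [← mul_inv_eq_one, ← h, pow_three]; group

theorem mul_pow_eq_one_comm {n : ℕ} (h : (x * y) ^ n = 1) : (y * x) ^ n = 1 := by
  simpa [h] using conj_pow (a := x⁻¹) (b := x * y) (i := n)

theorem commute_commutatorElement_left (hv : v ^ 3 = 1) (huv : (u * v) ^ 3 = 1)
    (hu'v : (u⁻¹ * v) ^ 3 = 1) : Commute ⁅u, v⁆ u := by
  have h₁ := mul_mul_eq_of_mul_pow_three huv
  have h₂ := mul_mul_eq_of_mul_pow_three (mul_pow_eq_one_comm hu'v)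
  rw [inv_inv] at h₂
  show u * v * u⁻¹ * v⁻¹ * u = u * (u * v * u⁻¹ * v⁻¹)
  calc u * v * u⁻¹ * v⁻¹ * u = u * (v * u⁻¹ * v * (v * u)) := by
        rw [inv_eq_mul_self_of_pow_three hv]; group
    _ = u * (u * v⁻¹ * (u * v * u)) := by rw [h₂]; group
    _ = u * (u * (v⁻¹ * v⁻¹) * u⁻¹ * v⁻¹) := by rw [h₁]; group
    _ = u * (u * v * u⁻¹ * v⁻¹) := by rw [inv_mul_inv_eq_self_of_pow_three hv]

theorem commute_commutatorElement_right (hu : u ^ 3 = 1) (huv : (u * v) ^ 3 = 1)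
    (hu'v : (u⁻¹ * v) ^ 3 = 1) : Commute ⁅u, v⁆ v := by
  have h₁ := mul_mul_eq_of_mul_pow_three (mul_pow_eq_one_comm huv)
  have h₂ := mul_mul_eq_of_mul_pow_three hu'v
  rw [inv_inv] at h₂
  have hu₂ := inv_mul_inv_eq_self_of_pow_three hu
  show u * v * u⁻¹ * v⁻¹ * v = v * (u * v * u⁻¹ * v⁻¹)
  calc u * v * u⁻¹ * v⁻¹ * v = u⁻¹ * u⁻¹ * v * u⁻¹ := by rw [hu₂]; group
    _ = u⁻¹ * (v⁻¹ * u * v⁻¹) := by rw [← h₂]; group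
    _ = u⁻¹ * v⁻¹ * (u⁻¹ * u⁻¹) * v⁻¹ := by rw [hu₂]; group
    _ = v * u * v * u⁻¹ * v⁻¹ := by rw [h₁]; group
    _ = v * (u * v * u⁻¹ * v⁻¹) := by group

theorem commutatorElement_pow_three (hu : u ^ 3 = 1) (hv : v ^ 3 = 1) (huv : (u * v) ^ 3 = 1)
    (hu'v : (u⁻¹ * v) ^ 3 = 1) : ⁅u, v⁆ ^ 3 = 1 := by
  have hcomm : Commute ⁅u, v⁆ (v * u) :=
    (commute_commutatorElement_right hu huv hu'v).mul_right
      (commute_commutatorElement_left hv huv hu'v)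
  calc ⁅u, v⁆ ^ 3 = ⁅u, v⁆ ^ 3 * (v * u) ^ 3 := by rw [mul_pow_eq_one_comm huv, mul_one]
    _ = (⁅u, v⁆ * (v * u)) ^ 3 := (hcomm.mul_pow 3).symm
    _ = (u * v) ^ 3 := by rw [commutatorElement_def]; group
    _ = 1 := huv

theorem mul_zpow_eq_of_mul_eq (h : y * x = w * x * y) (hw : Commute w x) (n : ℤ) :
    y * x ^ n = w ^ n * x ^ n * y := by
  simpa [SemiconjBy, hw.mul_zpow] using SemiconjBy.zpow_right (a := y) (x := x) (y := w * x) h n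

theorem zpow_mul_zpow_of_commute_commutatorElement (hu : Commute ⁅u, v⁆ u)
    (hv : Commute ⁅u, v⁆ v) (m n : ℤ) :
    v ^ n * u ^ m = u ^ m * v ^ n * ⁅u, v⁆ ^ (-(m * n)) := by
  have h₁ : u * v ^ (-n) = ⁅u, v⁆ ^ (-n) * v ^ (-n) * u :=
    mul_zpow_eq_of_mul_eq (by rw [commutatorElement_def]; group) hv (-n)
  have h₂ : v ^ n * u = ⁅u, v⁆ ^ (-n) * u * v ^ n := by
    calc v ^ n * u = v ^ n * (u * v ^ (-n)) * v ^ n := by group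
      _ = v ^ n * (v ^ (-n) * ⁅u, v⁆ ^ (-n)) * u * v ^ n := by
        rw [h₁, (hv.zpow_zpow (-n) (-n)).eq]; group
      _ = ⁅u, v⁆ ^ (-n) * u * v ^ n := by group
  rw [mul_zpow_eq_of_mul_eq h₂ (hu.zpow_left _) m, ← zpow_mul, mul_assoc,
    ((hu.zpow_zpow _ m).mul_right (hv.zpow_zpow _ n)).eq, neg_mul, mul_comm n m]

end Heisenberg

section NormalForm

variable {G : Type*} [Group G] {a u v g x : G}

theorem zpow_eq_pow_val_intCast {n : ℕ} [NeZero n] (h : x ^ n = 1) (m : ℤ) :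
    x ^ m = x ^ (m : ZMod n).val := by
  rw [zpow_eq_zpow_emod' m h, ← ZMod.val_intCast, zpow_natCast]

variable (a u v) in
def normalForm (t : ZMod 3 × ZMod 3 × ZMod 3 × ZMod 2) : G :=
  u ^ t.1.val * v ^ t.2.1.val * ⁅u, v⁆ ^ t.2.2.1.val * a ^ t.2.2.2.val

theorem map_normalForm {G' : Type*} [Group G'] (f : G →* G')
    (t : ZMod 3 × ZMod 3 × ZMod 3 × ZMod 2) :
    f (normalForm a u v t) = normalForm (f a) (f u) (f v) t := by
  simp [normalForm, commutatorElement_def]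

variable (a u v) in
def normalWords : Set G :=
  {g | ∃ i j k : ℤ, g = u ^ i * v ^ j * ⁅u, v⁆ ^ k ∨ g = u ^ i * v ^ j * ⁅u, v⁆ ^ k * a}

theorem exists_normalForm_eq (hu : u ^ 3 = 1) (hv : v ^ 3 = 1) (hz : ⁅u, v⁆ ^ 3 = 1)
    (hg : g ∈ normalWords a u v) : ∃ t, normalForm a u v t = g := by
  simp only [normalWords, zpow_eq_pow_val_intCast hu, zpow_eq_pow_val_intCast hv,
    zpow_eq_pow_val_intCast hz] at hg
  obtain ⟨i, j, k, rfl | rfl⟩ := hg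
  · exact ⟨(i, j, k, 0), by simp [normalForm]⟩
  · exact ⟨(i, j, k, 1), by simp [normalForm, ZMod.val_one]⟩

theorem mul_mem_normalWords (ha : a ^ 2 = 1) (hg : g ∈ normalWords a u v) :
    g * a ∈ normalWords a u v := by
  obtain ⟨i, j, k, rfl | rfl⟩ := hg
  · exact ⟨i, j, k, Or.inr rfl⟩
  · exact ⟨i, j, k, Or.inl (by rw [mul_assoc, ← sq, ha, mul_one])⟩

theorem mul_zpow_mem_normalWords_left (hzu : Commute ⁅u, v⁆ u) (hzv : Commute ⁅u, v⁆ v)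
    (hau : a * u * a⁻¹ = u⁻¹) (hg : g ∈ normalWords a u v) (m : ℤ) :
    g * u ^ m ∈ normalWords a u v := by
  have hvu := zpow_mul_zpow_of_commute_commutatorElement hzu hzv
  have hau' : a * u ^ m = u ^ (-m) * a := by
    rw [← inv_zpow', ← hau, conj_zpow]; group
  obtain ⟨i, j, k, rfl | rfl⟩ := hg
  · refine ⟨i + m, j, k - m * j, Or.inl ?_⟩
    calc u ^ i * v ^ j * ⁅u, v⁆ ^ k * u ^ m = u ^ i * v ^ j * (⁅u, v⁆ ^ k * u ^ m) := by group
      _ = u ^ i * (v ^ j * u ^ m) * ⁅u, v⁆ ^ k := by rw [(hzu.zpow_zpow k m).eq]; group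
      _ = _ := by rw [hvu]; group
  · refine ⟨i - m, j, k + m * j, Or.inr ?_⟩
    calc u ^ i * v ^ j * ⁅u, v⁆ ^ k * a * u ^ m
        = u ^ i * v ^ j * (⁅u, v⁆ ^ k * u ^ (-m)) * a := by rw [mul_assoc _ a, hau']; group
      _ = u ^ i * (v ^ j * u ^ (-m)) * ⁅u, v⁆ ^ k * a := by
        rw [(hzu.zpow_zpow k (-m)).eq]; group
      _ = _ := by rw [hvu]; group

theorem mul_zpow_mem_normalWords_right (hzv : Commute ⁅u, v⁆ v)
    (hav : a * v * a⁻¹ = v⁻¹ * ⁅u, v⁆⁻¹) (hg : g ∈ normalWords a u v) (n : ℤ) :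
    g * v ^ n ∈ normalWords a u v := by
  have hav' : a * v ^ n = v ^ (-n) * ⁅u, v⁆ ^ (-n) * a := by
    rw [← inv_zpow', ← inv_zpow', ← hzv.symm.inv_inv.mul_zpow, ← hav, conj_zpow]; group
  obtain ⟨i, j, k, rfl | rfl⟩ := hg
  · refine ⟨i, j + n, k, Or.inl ?_⟩
    calc u ^ i * v ^ j * ⁅u, v⁆ ^ k * v ^ n = u ^ i * v ^ j * (⁅u, v⁆ ^ k * v ^ n) := by group
      _ = _ := by rw [(hzv.zpow_zpow k n).eq]; group
  · refine ⟨i, j - n, k - n, Or.inr ?_⟩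
    calc u ^ i * v ^ j * ⁅u, v⁆ ^ k * a * v ^ n
        = u ^ i * v ^ j * (⁅u, v⁆ ^ k * v ^ (-n)) * ⁅u, v⁆ ^ (-n) * a := by
          rw [mul_assoc _ a, hav']; group
      _ = _ := by rw [(hzv.zpow_zpow k (-n)).eq]; group

theorem normalForm_surjective (ha : a ^ 2 = 1) (hu : u ^ 3 = 1) (hv : v ^ 3 = 1)
    (huv : (u * v) ^ 3 = 1) (hu'v : (u⁻¹ * v) ^ 3 = 1) (hau : a * u * a⁻¹ = u⁻¹)
    (hav : a * v * a⁻¹ = v⁻¹ * ⁅u, v⁆⁻¹) (hgen : Subgroup.closure {a, u, v} = ⊤) :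
    Function.Surjective (normalForm a u v) := by
  have hzu := commute_commutatorElement_left hv huv hu'v
  have hzv := commute_commutatorElement_right hu huv hu'v
  intro g
  refine exists_normalForm_eq hu hv (commutatorElement_pow_three hu hv huv hu'v) ?_
  induction hgen ▸ Subgroup.mem_top g using Subgroup.closure_induction_right with
  | one => exact ⟨0, 0, 0, Or.inl (by simp)⟩
  | mul_right g _ y hy hg =>
    rcases hy with rfl | rfl | rfl
    · exact mul_mem_normalWords ha hg
    · simpa using mul_zpow_mem_normalWords_left hzu hzv hau hg 1
    · simpa using mul_zpow_mem_normalWords_right hzv hav hg 1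
  | mul_inv_cancel g _ y hy hg =>
    rcases hy with rfl | rfl | rfl
    · rw [inv_eq_of_mul_eq_one_right (by rw [← sq, ha])]
      exact mul_mem_normalWords ha hg
    · simpa using mul_zpow_mem_normalWords_left hzu hzv hau hg (-1)
    · simpa using mul_zpow_mem_normalWords_right hzv hav hg (-1)

end NormalForm

theorem MulEquiv.comap_center {G G' : Type*} [Group G] [Group G'] (e : G ≃* G') :
    (Subgroup.center G').comap e.toMonoidHom = Subgroup.center G := by
  ext x
  rw [Subgroup.mem_comap, ← SetLike.mem_coe, ← SetLike.mem_coe, Subgroup.coe_center,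
    Subgroup.coe_center]
  exact MulEquivClass.apply_mem_center_iff e

/-- `(x, y, z, s)` stands for the matrix `[[1, x, z], [0, s, y], [0, 0, 1]]` over `𝔽₃`. -/
def SignedHeisenberg := ZMod 3 × ZMod 3 × ZMod 3 × ℤˣ

namespace SignedHeisenberg

instance : Fintype SignedHeisenberg :=
  inferInstanceAs (Fintype (ZMod 3 × ZMod 3 × ZMod 3 × ℤˣ))

instance : DecidableEq SignedHeisenberg :=
  inferInstanceAs (DecidableEq (ZMod 3 × ZMod 3 × ZMod 3 × ℤˣ))

instance : Mul SignedHeisenberg :=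
  ⟨fun ⟨x, y, z, s⟩ ⟨x', y', z', s'⟩ => (s' • x + x', y + s • y', z + z' + x * y', s * s')⟩

instance : One SignedHeisenberg := ⟨(0, 0, 0, 1)⟩

instance : Inv SignedHeisenberg :=
  ⟨fun ⟨x, y, z, s⟩ => (-(s • x), -(s • y), (s • x) * y - z, s)⟩

instance : Group SignedHeisenberg := Group.ofLeftAxioms
  (by
    rintro ⟨x, y, z, s⟩ ⟨x', y', z', s'⟩ ⟨x'', y'', z'', s''⟩
    show (_, _, _, _) = (_, _, _, _)
    simp only [Units.smul_def, zsmul_eq_mul, Units.val_mul, Int.cast_mul, Prod.mk.injEq]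
    exact ⟨by ring, by ring, by ring, mul_assoc _ _ _⟩)
  (by
    rintro ⟨x, y, z, s⟩
    show (_, _, _, _) = (_, _, _, _)
    simp)
  (by
    rintro ⟨x, y, z, s⟩
    show (_, _, _, _) = (_, _, _, _)
    obtain rfl | rfl := Int.units_eq_one_or s <;> simp)

def a : SignedHeisenberg := (0, 0, 0, -1)
def b : SignedHeisenberg := (1, 0, 0, -1)
def c : SignedHeisenberg := (0, 1, 0, -1)

theorem card_eq : Nat.card SignedHeisenberg = 54 := by
  rw [Nat.card_eq_fintype_card]; rfl

theorem normalForm_bijective : Function.Bijective (normalForm a (a * b) (b * c)) := by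
  decide

theorem center_eq_zpowers :
    Subgroup.center SignedHeisenberg = Subgroup.zpowers ((a * b * c) ^ 2) := by
  refine le_antisymm (fun k hk => ?_)
    (Subgroup.zpowers_le.mpr (Subgroup.mem_center_iff.mpr (by decide)))
  have central_eq_pow : ∀ k : SignedHeisenberg, (∀ g, g * k = k * g) →
      ∃ n : Fin 3, ((a * b * c) ^ 2) ^ (n : ℕ) = k := by
    decide
  obtain ⟨n, rfl⟩ := central_eq_pow k (Subgroup.mem_center_iff.mp hk)
  exact Subgroup.pow_mem _ (Subgroup.mem_zpowers _) _

theorem orderOf_abc_sq : orderOf ((a * b * c) ^ 2) = 3 :=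
  orderOf_eq_prime (by decide) (by decide)

end SignedHeisenberg

namespace hRels

local notation "H" => PresentedGroup hRels

def a : H := PresentedGroup.of 0
def b : H := PresentedGroup.of 1
def c : H := PresentedGroup.of 2

theorem relations :
    a ^ 2 = 1 ∧ b ^ 2 = 1 ∧ c ^ 2 = 1 ∧ (a * b) ^ 3 = 1 ∧ (b * c) ^ 3 = 1 ∧ (c * a) ^ 3 = 1 ∧
      (a * b * a * c) ^ 3 = 1 := by
  refine ⟨?_, ?_, ?_, ?_, ?_, ?_, ?_⟩ <;>
  · refine (map_pow _ _ _).symm.trans (PresentedGroup.one_of_mem ?_)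
    simp [hRels]

theorem mul_mul_cancel_of_sq {x : H} (hx : x ^ 2 = 1) (y : H) : x * (x * y) = y := by
  rw [← mul_assoc, ← sq, hx, one_mul]

theorem closure_eq_top : Subgroup.closure {a, a * b, b * c} = ⊤ := by
  obtain ⟨ha, hb, -⟩ := relations
  rw [eq_top_iff, ← PresentedGroup.closure_range_of, Subgroup.closure_le]
  have gen_mem {x : H} (hx : x ∈ ({a, a * b, b * c} : Set H)) := Subgroup.subset_closure hx
  have ha_mem := gen_mem (Set.mem_insert a _)
  have hb_mem : b ∈ Subgroup.closure {a, a * b, b * c} := by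
    simpa only [mul_mul_cancel_of_sq ha] using mul_mem ha_mem (gen_mem (x := a * b) (by simp))
  rintro _ ⟨i, rfl⟩
  rw [SetLike.mem_coe]
  fin_cases i
  · exact ha_mem
  · exact hb_mem
  · show c ∈ _
    simpa only [mul_mul_cancel_of_sq hb] using mul_mem hb_mem (gen_mem (x := b * c) (by simp))

theorem normalForm_surjective : Function.Surjective (normalForm a (a * b) (b * c)) := by
  obtain ⟨ha, hb, hc, hab, hbc, hca, habac⟩ := relations
  have inv_of_sq {x : H} (hx : x ^ 2 = 1) : x⁻¹ = x :=
    inv_eq_of_mul_eq_one_right (by rw [← sq, hx])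
  have haa := mul_mul_cancel_of_sq ha
  have hbb := mul_mul_cancel_of_sq hb
  have hcc := mul_mul_cancel_of_sq hc
  refine _root_.normalForm_surjective ha hab hbc ?_ ?_ ?_ ?_ ?_
  · simpa [mul_assoc, hbb] using mul_pow_eq_one_comm hca
  · rw [inv_eq_mul_self_of_pow_three hab, ← habac]
    simp only [mul_assoc, hbb]
  · simp only [mul_inv_rev, inv_of_sq ha, inv_of_sq hb, haa]
  · simp only [commutatorElement_def, mul_inv_rev, inv_of_sq ha, inv_of_sq hb, inv_of_sq hc,
      mul_assoc, hbb, hcc]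
  · exact closure_eq_top

theorem lift_model_eq_one : ∀ r ∈ hRels,
    FreeGroup.lift ![SignedHeisenberg.a, SignedHeisenberg.b, SignedHeisenberg.c] r = 1 := by
  rintro r (rfl | rfl | rfl | rfl | rfl | rfl | rfl) <;>
    simp only [map_pow, map_mul, FreeGroup.lift_apply_of] <;> decide

def toModel : H →* SignedHeisenberg := PresentedGroup.toGroup lift_model_eq_one

theorem toModel_bijective : Function.Bijective toModel := by
  have hcomp : toModel ∘ normalForm a (a * b) (b * c) =
      normalForm SignedHeisenberg.a (SignedHeisenberg.a * SignedHeisenberg.b)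
        (SignedHeisenberg.b * SignedHeisenberg.c) := by
    funext t
    simp [map_normalForm, toModel, a, b, c]
  have hK := hcomp ▸ SignedHeisenberg.normalForm_bijective
  exact ⟨hK.1.of_comp_right normalForm_surjective, hK.2.of_comp⟩

noncomputable def equivModel : H ≃* SignedHeisenberg :=
  MulEquiv.ofBijective toModel toModel_bijective

theorem equivModel_abc_sq :
    equivModel ((a * b * c) ^ 2) =
      (SignedHeisenberg.a * SignedHeisenberg.b * SignedHeisenberg.c) ^ 2 := by
  simp [equivModel, toModel, a, b, c]

theorem center_eq_zpowers : Subgroup.center H = Subgroup.zpowers ((a * b * c) ^ 2) := by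
  rw [← MulEquiv.comap_center equivModel, SignedHeisenberg.center_eq_zpowers,
    ← equivModel_abc_sq, ← MulEquiv.coe_toMonoidHom, ← MonoidHom.map_zpowers]
  exact Subgroup.comap_map_eq_self_of_injective equivModel.injective _

end hRels

/-- H has order 54, its center is cyclic of order 3 generated by (abc)², and
H/Z(H) has order 18. -/
theorem hGroup_card_center :
    Nat.card (PresentedGroup hRels) = 54 ∧
    Subgroup.center (PresentedGroup hRels) =
      Subgroup.zpowers ((PresentedGroup.of 0 * PresentedGroup.of 1 *
        PresentedGroup.of 2 : PresentedGroup hRels) ^ 2) ∧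
    Nat.card (Subgroup.center (PresentedGroup hRels)) = 3 ∧
    Nat.card (PresentedGroup hRels ⧸ Subgroup.center (PresentedGroup hRels)) = 18 := by
  have hcard : Nat.card (PresentedGroup hRels) = 54 := by
    rw [Nat.card_congr hRels.equivModel.toEquiv, SignedHeisenberg.card_eq]
  have hcenter : Nat.card (Subgroup.center (PresentedGroup hRels)) = 3 := by
    rw [hRels.center_eq_zpowers, Nat.card_zpowers, ← hRels.equivModel.orderOf_eq,
      hRels.equivModel_abc_sq, SignedHeisenberg.orderOf_abc_sq]
  refine ⟨hcard, hRels.center_eq_zpowers, hcenter, ?_⟩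
  have := (Subgroup.center (PresentedGroup hRels)).card_eq_card_quotient_mul_card_subgroup
  rw [hcard, hcenter] at this
  omega
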